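/- From Hermitian self-orthogonal codes to symplectic self-orthogonal codes: Let q be a prime power. If there exists an F_{q^2}-linear code X ⊆ F_{q^2}^n such that X ⊆ X^⊥h, then there exists an F_q-linear code C ⊆ F_q^{2n} such that C ⊆ C^⊥s, |C| = |X|, swt(C^⊥s \ C) = wt(X^⊥h \ X), and swt(C) = wt(X); explicitly, for a basis {1, β} of F_{q^2} over F_q, the code C = {(u|v) : u, v ∈ F_q^n, u + βv ∈ X} has these properties. -/

import Mathlib

open Finset

/-- Symplectic weight of a vector `(a|b) ∈ F_q^n × F_q^n`. -/
noncomputable def swt {F : Type} [Field F] {n : ℕ} (v : (Fin n → F) × (Fin n → F)) : ℕ :=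
  {i : Fin n | ¬(v.1 i = 0 ∧ v.2 i = 0)}.ncard

/-- Minimum symplectic weight of a nonzero element of a set. -/
noncomputable def minSwt {F : Type} [Field F] {n : ℕ} (S : Set ((Fin n → F) × (Fin n → F))) : ℕ :=
  sInf (swt '' (S \ {0}))

/-- The trace-symplectic form on `F_q^{2n}`. -/
noncomputable def trSympForm (p : ℕ) {F : Type} [Field F] [Fintype F] [CharP F p] {n : ℕ}
    (u v : (Fin n → F) × (Fin n → F)) : ZMod p :=
  letI := ZMod.algebra F p
  Algebra.trace (ZMod p) F (∑ i, (v.1 i * u.2 i - u.1 i * v.2 i))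

/-- The trace-symplectic dual of a set of vectors in `F_q^{2n}`. -/
def sympDual (p : ℕ) {F : Type} [Field F] [Fintype F] [CharP F p] {n : ℕ}
    (C : Set ((Fin n → F) × (Fin n → F))) : Set ((Fin n → F) × (Fin n → F)) :=
  {v | ∀ w ∈ C, trSympForm p v w = 0}

/-- `C` (an additive code in `F_q^{2n}`) defines an `((n,K,R,d))_q` Clifford subsystem code. -/
def IsSubsysCode (p : ℕ) {F : Type} [Field F] [Fintype F] [CharP F p] {n : ℕ}
    (C : AddSubgroup ((Fin n → F) × (Fin n → F))) (K R d : ℕ) : Prop :=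
  let Ds : Set ((Fin n → F) × (Fin n → F)) := ↑C ∩ sympDual p ↑C
  Nat.card Ds * (K * R) = Fintype.card F ^ n ∧
  Nat.card C * K = Fintype.card F ^ n * R ∧
  (sympDual p Ds = ↑C → d = minSwt (sympDual p Ds)) ∧
  (sympDual p Ds ≠ ↑C → d = minSwt (sympDual p Ds \ ↑C))

/-- The subsystem code defined by `C` is pure to `d'`. -/
def PureTo {F : Type} [Field F] {n : ℕ}
    (C : AddSubgroup ((Fin n → F) × (Fin n → F))) (d' : ℕ) : Prop :=
  ∀ v ∈ C, v ≠ 0 → d' ≤ swt v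

/-- The subsystem code defined by `C` is `F_q`-linear. -/
def FqLinear {F : Type} [Field F] {n : ℕ}
    (C : AddSubgroup ((Fin n → F) × (Fin n → F))) : Prop :=
  ∀ (a : F), ∀ v ∈ C, a • v ∈ C

/-- Hamming weight.-/
noncomputable def hwt {F : Type} [Field F] {n : ℕ} (v : Fin n → F) : ℕ := {i | v i ≠ 0}.ncard

/-- Minimum Hamming weight of a nonzero element of a set. -/
noncomputable def minHwt {F : Type} [Field F] {n : ℕ} (S : Set (Fin n → F)) : ℕ :=
  sInf (hwt '' (S \ {0}))

/-- Euclidean dual. -/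
def euclDual {F : Type} [Field F] {n : ℕ} (C : Set (Fin n → F)) : Set (Fin n → F) :=
  {x | ∀ y ∈ C, ∑ i, x i * y i = 0}

/-- Hermitian dual (with respect to `x ↦ x^q`). -/
def hermDual (q : ℕ) {K : Type} [Field K] {n : ℕ} (C : Set (Fin n → K)) : Set (Fin n → K) :=
  {x | ∀ y ∈ C, ∑ i, x i ^ q * y i = 0}

/-- Cyclotomic coset of `a` modulo `n` (w.r.t. multiplier `q`). -/
def cycCoset (q n : ℕ) (a : ZMod n) : Set (ZMod n) := {x | ∃ i : ℕ, x = a * (q : ZMod n) ^ i}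

/-!
The map `φ : (u|v) ↦ u + βv` is an `F_q`-linear bijection `F_q^{2n} → F_{q^2}^n` taking symplectic
weight to Hamming weight, and `C = φ⁻¹(X)`; so linearity, size and both minimum weights transfer once
`C^⊥s = φ⁻¹(X^⊥h)` is known. For that, write `H(x, y) = ∑ xᵢ^q yᵢ`. Then
`H(φw, φc) - H(φc, φw) = (β^q - β) ⟨w, c⟩_s`, with `β^q ≠ β`; nondegeneracy of the trace and
`F_q`-linearity of `C` remove the trace from the symplectic dual, so `w ∈ C^⊥s` iff `H` is symmetric
between `φw` and `X`. Since `X` is `F_{q^2}`-linear, testing symmetry against `y` and `βy` forces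
`H(φw, y) = 0`; conversely `H(y, x) = H(x, y)^q` because `z^{q^2} = z`.
-/

open Function

section Hermitian

variable {K : Type} [Field K] {ι : Type} [Fintype ι]

def hermForm (q : ℕ) (x y : ι → K) : K := ∑ i, x i ^ q * y i

lemma hermForm_smul_left (q : ℕ) (c : K) (x y : ι → K) :
    hermForm q (c • x) y = c ^ q * hermForm q x y := by
  simp only [hermForm, mul_sum, Pi.smul_apply, smul_eq_mul, mul_pow, mul_assoc]

lemma hermForm_smul_right (q : ℕ) (c : K) (x y : ι → K) :
    hermForm q x (c • y) = c * hermForm q x y := by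
  simp only [hermForm, mul_sum, Pi.smul_apply, smul_eq_mul, mul_left_comm]

lemma hermForm_swap {F : Type} [Field F] [Fintype F] [Fintype K] [Algebra F K]
    (hK : Fintype.card K = Fintype.card F ^ 2) (x y : ι → K) :
    hermForm (Fintype.card F) y x = hermForm (Fintype.card F) x y ^ Fintype.card F := by
  have hfrob : ∀ z : K, (z ^ Fintype.card F) ^ Fintype.card F = z := fun z => by
    rw [← pow_mul, ← sq, ← hK, FiniteField.pow_card]
  change _ = FiniteField.frobeniusAlgHom F K _
  simp only [hermForm, map_sum, map_mul, FiniteField.frobeniusAlgHom_apply, hfrob, mul_comm]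

lemma hermForm_eq_zero_of_forall_eq {q : ℕ} {β : K} (hβ : β ^ q ≠ β) {X : Submodule K (ι → K)}
    {x y : ι → K} (hsymm : ∀ z ∈ X, hermForm q x z = hermForm q z x) (hy : y ∈ X) :
    hermForm q x y = 0 := by
  have h := hsymm (β • y) (X.smul_mem β hy)
  rw [hermForm_smul_left, hermForm_smul_right, ← hsymm y hy] at h
  have : (β - β ^ q) * hermForm q x y = 0 := by rw [sub_mul, h, sub_self]
  exact (mul_eq_zero.mp this).resolve_left (sub_ne_zero.mpr hβ.symm)

end Hermitian

section Symplectic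

variable {F : Type} [Field F] {ι : Type} [Fintype ι]

def sympForm (u v : (ι → F) × (ι → F)) : F := ∑ i, (v.1 i * u.2 i - u.1 i * v.2 i)

lemma sympForm_smul_right (a : F) (u v : (ι → F) × (ι → F)) :
    sympForm u (a • v) = a * sympForm u v := by
  simp only [sympForm, mul_sum, Prod.smul_fst, Prod.smul_snd, Pi.smul_apply, smul_eq_mul]
  exact sum_congr rfl fun i _ => by ring

lemma mem_sympDual_iff (p : ℕ) [Fintype F] [CharP F p] {n : ℕ}
    (C : Submodule F ((Fin n → F) × (Fin n → F))) (v : (Fin n → F) × (Fin n → F)) :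
    v ∈ sympDual p (C : Set ((Fin n → F) × (Fin n → F))) ↔ ∀ w ∈ C, sympForm v w = 0 := by
  have : Fact p.Prime := ⟨CharP.char_is_prime F p⟩
  let := ZMod.algebra F p
  refine ⟨fun hv w hw => (traceForm_nondegenerate (ZMod p) F).1 _ fun a => ?_,
    fun hv w hw => ?_⟩
  · have h : Algebra.trace (ZMod p) F (sympForm v (a • w)) = 0 := hv _ (C.smul_mem a hw)
    rwa [sympForm_smul_right, mul_comm] at h
  · change Algebra.trace (ZMod p) F (sympForm v w) = 0
    rw [hv w hw, map_zero]

end Symplectic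

def pairToExt (F : Type) {K : Type} [Field F] [Field K] [Algebra F K] (β : K) {ι : Type} :
    (ι → F) × (ι → F) →ₗ[F] (ι → K) where
  toFun w i := algebraMap F K (w.1 i) + algebraMap F K (w.2 i) * β
  map_add' u v := by ext i; simp only [Prod.fst_add, Prod.snd_add, Pi.add_apply, map_add]; ring
  map_smul' a u := by
    ext i
    simp only [Prod.smul_fst, Prod.smul_snd, Pi.smul_apply, smul_eq_mul, map_mul,
      RingHom.id_apply]
    rw [Algebra.smul_def]
    ring

section Coordinates

variable {F K : Type} [Field F] [Field K] [Algebra F K]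

lemma pairToExt_apply (β : K) {ι : Type} (w : (ι → F) × (ι → F)) (i : ι) :
    pairToExt F β w i = algebraMap F K (w.1 i) + algebraMap F K (w.2 i) * β := rfl

variable {β : K}

lemma algebraMap_add_mul_eq_zero_iff
    (hβ : ∀ x : K, ∃! uv : F × F, x = algebraMap F K uv.1 + algebraMap F K uv.2 * β) {u v : F} :
    algebraMap F K u + algebraMap F K v * β = 0 ↔ u = 0 ∧ v = 0 := by
  refine ⟨fun h => ?_, by rintro ⟨rfl, rfl⟩; simp⟩
  exact Prod.ext_iff.mp ((hβ 0).unique (y₁ := (u, v)) (y₂ := 0) h.symm (by simp))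

lemma pairToExt_bijective
    (hβ : ∀ x : K, ∃! uv : F × F, x = algebraMap F K uv.1 + algebraMap F K uv.2 * β) {ι : Type} :
    Bijective (pairToExt F β : (ι → F) × (ι → F) → ι → K) := by
  refine ⟨(injective_iff_map_eq_zero _).2 fun w hw => ?_, fun y => ?_⟩
  · have h i := (algebraMap_add_mul_eq_zero_iff hβ).1 (congrFun hw i)
    exact Prod.ext (funext fun i => (h i).1) (funext fun i => (h i).2)
  · choose f hf using fun i => (hβ (y i)).exists
    exact ⟨(fun i => (f i).1, fun i => (f i).2), funext fun i => (hf i).symm⟩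

lemma hwt_pairToExt
    (hβ : ∀ x : K, ∃! uv : F × F, x = algebraMap F K uv.1 + algebraMap F K uv.2 * β) {n : ℕ}
    (w : (Fin n → F) × (Fin n → F)) : hwt (pairToExt F β w) = swt w := by
  unfold hwt swt
  simp only [pairToExt_apply, ne_eq, algebraMap_add_mul_eq_zero_iff hβ]

/-- Otherwise the Frobenius of `K/F` would fix `1` and `β`, hence be trivial, whereas its order is
`[K : F] = 2`. -/
lemma pow_card_ne_self [Fintype F] [Fintype K]
    (hβ : ∀ x : K, ∃! uv : F × F, x = algebraMap F K uv.1 + algebraMap F K uv.2 * β)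
    (hK : Fintype.card K = Fintype.card F ^ 2) :
    β ^ Fintype.card F ≠ β := by
  intro hfix
  have hfrob : FiniteField.frobeniusAlgHom F K = 1 := by
    ext x
    obtain ⟨⟨u, v⟩, rfl, -⟩ := hβ x
    simp only [map_add, map_mul, AlgHom.commutes, FiniteField.frobeniusAlgHom_apply, hfix,
      AlgHom.one_apply]
  have hrank : Module.finrank F K = 2 :=
    Nat.pow_right_injective Fintype.one_lt_card <| by
      dsimp only
      rw [← Module.card_eq_pow_finrank (K := F) (V := K), hK]
  have := FiniteField.orderOf_frobeniusAlgHom F K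
  rw [hfrob, orderOf_one, hrank] at this
  omega

end Coordinates

section Duality

variable {F K : Type} [Field F] [Fintype F] [Field K] [Algebra F K] {β : K}

lemma pow_card_pairToExt {ι : Type} (w : (ι → F) × (ι → F)) (i : ι) :
    pairToExt F β w i ^ Fintype.card F =
      algebraMap F K (w.1 i) + algebraMap F K (w.2 i) * β ^ Fintype.card F := by
  change FiniteField.frobeniusAlgHom F K _ = _
  simp only [pairToExt_apply, map_add, map_mul, AlgHom.commutes,
    FiniteField.frobeniusAlgHom_apply]

lemma hermForm_pairToExt_sub_swap {ι : Type} [Fintype ι] (w c : (ι → F) × (ι → F)) :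
    hermForm (Fintype.card F) (pairToExt F β w) (pairToExt F β c) -
        hermForm (Fintype.card F) (pairToExt F β c) (pairToExt F β w) =
      (β ^ Fintype.card F - β) * algebraMap F K (sympForm w c) := by
  simp only [hermForm, sympForm, ← sum_sub_distrib, map_sum, mul_sum, pow_card_pairToExt]
  simp only [pairToExt_apply, map_sub, map_mul]
  exact sum_congr rfl fun i _ => by ring

lemma sympDual_preimage_pairToExt (p : ℕ) [CharP F p] [Fintype K]
    (hK : Fintype.card K = Fintype.card F ^ 2)
    (hβ : ∀ x : K, ∃! uv : F × F, x = algebraMap F K uv.1 + algebraMap F K uv.2 * β)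
    {n : ℕ} (X : Submodule K (Fin n → K)) :
    sympDual p (pairToExt F β ⁻¹' X) =
      pairToExt F β ⁻¹' hermDual (Fintype.card F) (X : Set (Fin n → K)) := by
  set q := Fintype.card F
  have hβq : β ^ q ≠ β := pow_card_ne_self hβ hK
  ext w
  calc w ∈ sympDual p (pairToExt F β ⁻¹' (X : Set (Fin n → K)))
        ↔ ∀ c, pairToExt F β c ∈ X → sympForm w c = 0 :=
        mem_sympDual_iff p ((X.restrictScalars F).comap (pairToExt F β)) w
    _ ↔ ∀ c, pairToExt F β c ∈ X → hermForm q (pairToExt F β w) (pairToExt F β c) =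
          hermForm q (pairToExt F β c) (pairToExt F β w) := by
        refine forall₂_congr fun c _ => ?_
        rw [← sub_eq_zero (a := hermForm q _ _), hermForm_pairToExt_sub_swap, mul_eq_zero,
          sub_eq_zero, or_iff_right hβq, map_eq_zero_iff _ (algebraMap F K).injective]
    _ ↔ ∀ y ∈ X, hermForm q (pairToExt F β w) y = hermForm q y (pairToExt F β w) :=
        ((pairToExt_bijective hβ).surjective.forall (p := fun y => y ∈ X →
          hermForm q (pairToExt F β w) y = hermForm q y (pairToExt F β w))).symm
    _ ↔ ∀ y ∈ X, hermForm q (pairToExt F β w) y = 0 := by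
        refine ⟨fun h y hy => hermForm_eq_zero_of_forall_eq hβq h hy, fun h y hy => ?_⟩
        rw [h y hy, hermForm_swap hK, h y hy, zero_pow Fintype.card_ne_zero]

end Duality

lemma minSwt_preimage {F K : Type} [Field F] [Field K] {n : ℕ}
    {φ : (Fin n → F) × (Fin n → F) → Fin n → K} (hφ : Bijective φ) (hφ0 : φ 0 = 0)
    (hwt_φ : ∀ w, hwt (φ w) = swt w) (T : Set (Fin n → K)) :
    minSwt (φ ⁻¹' T) = minHwt T := by
  have hdiff : φ ⁻¹' T \ {0} = φ ⁻¹' (T \ {0}) := by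
    ext w
    simp only [Set.mem_sdiff, Set.mem_preimage, Set.mem_singleton_iff, ← hφ0, hφ.1.eq_iff]
  rw [minSwt, minHwt, hdiff, ← funext hwt_φ, ← Set.image_image, Set.image_preimage_eq _ hφ.2]

theorem hermitian_to_symplectic_self_orthogonal_general
    (p : ℕ) (F : Type) [Field F] [Fintype F] [CharP F p]
    (K : Type) [Field K] [Fintype K] [Algebra F K]
    (hK : Fintype.card K = Fintype.card F ^ 2)
    (β : K)
    -- `{1, β}` is a basis of `F_{q^2}` over `F_q`
    (hβ : ∀ x : K, ∃! uv : F × F, x = algebraMap F K uv.1 + algebraMap F K uv.2 * β)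
    (n : ℕ) (X : Submodule K (Fin n → K))
    (hX : (↑X : Set (Fin n → K)) ⊆ hermDual (Fintype.card F) ↑X) :
    ∀ C : Set ((Fin n → F) × (Fin n → F)),
      C = {w | (fun i => algebraMap F K (w.1 i) + algebraMap F K (w.2 i) * β) ∈ X} →
      (∀ (a : F), ∀ w ∈ C, a • w ∈ C) ∧
      C ⊆ sympDual p C ∧
      Nat.card C = Nat.card X ∧
      minSwt (sympDual p C \ C) = minHwt (hermDual (Fintype.card F) (↑X : Set (Fin n → K)) \ ↑X) ∧
      minSwt C = minHwt (↑X : Set (Fin n → K)) := by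
  intro C hC
  replace hC : C = pairToExt F β ⁻¹' (X : Set (Fin n → K)) := hC
  subst hC
  have hφ := pairToExt_bijective (ι := Fin n) hβ
  have hdual := sympDual_preimage_pairToExt p hK hβ X
  have hmin := minSwt_preimage hφ (map_zero _) (hwt_pairToExt hβ)
  refine ⟨fun a w hw => ((X.restrictScalars F).comap (pairToExt F β)).smul_mem a hw,
    hdual ▸ Set.preimage_mono hX, Nat.card_preimage_of_injective hφ.1 (by simp [hφ.2.range_eq]),
    by rw [hdual, ← Set.preimage_sdiff, hmin], hmin _⟩

/-- From Hermitian self-orthogonal codes to symplectic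
self-orthogonal codes.  If `X ⊆ F_{q^2}^n` is `F_{q^2}`-linear with
`X ⊆ X^⊥h`, then, for a basis `{1, β}` of `F_{q^2}` over `F_q`, the code
`C = {(u|v) : u, v ∈ F_q^n, u + βv ∈ X}` is `F_q`-linear, satisfies
`C ⊆ C^⊥s`, `|C| = |X|`, `swt(C^⊥s \ C) = wt(X^⊥h \ X)`, and
`swt(C) = wt(X)`. -/
theorem hermitian_to_symplectic_self_orthogonal
    (p : ℕ) (hp : p.Prime) (F : Type) [Field F] [Fintype F] [CharP F p]
    (K : Type) [Field K] [Fintype K] [CharP K p] [Algebra F K]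
    (hK : Fintype.card K = Fintype.card F ^ 2)
    (β : K)
    -- `{1, β}` is a basis of `F_{q^2}` over `F_q`
    (hβ : ∀ x : K, ∃! uv : F × F, x = algebraMap F K uv.1 + algebraMap F K uv.2 * β)
    (n : ℕ) (X : Submodule K (Fin n → K))
    (hX : (↑X : Set (Fin n → K)) ⊆ hermDual (Fintype.card F) ↑X) :
    ∀ C : Set ((Fin n → F) × (Fin n → F)),
      C = {w | (fun i => algebraMap F K (w.1 i) + algebraMap F K (w.2 i) * β) ∈ X} →
      (∀ (a : F), ∀ w ∈ C, a • w ∈ C) ∧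
      C ⊆ sympDual p C ∧
      Nat.card C = Nat.card X ∧
      minSwt (sympDual p C \ C) = minHwt (hermDual (Fintype.card F) (↑X : Set (Fin n → K)) \ ↑X) ∧
      minSwt C = minHwt (↑X : Set (Fin n → K)) :=
  hermitian_to_symplectic_self_orthogonal_general p F K hK β hβ n X hX
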